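/- Let Z be a Banach space, let γ_1, …, γ_q ∈ ℝ^d (1 ≤ q ≤ d) be linearly independent, and let Γ be the lattice they generate. Then X_{Γ,Z} = C_u(ℝ^d/Γ, Z) ⊕ C_0(ℝ^d, Z) = {v + w : v Γ-periodic bounded uniformly continuous, w bounded uniformly continuous tending to 0 at infinity} is a closed linear subspace of C_u(ℝ^d, Z). -/

import Mathlib

open MeasureTheory Filter Topology BoundedContinuousFunction

/-- The set `X_{Γ,Z} = C_u(ℝ^d/Γ, Z) ⊕ C₀(ℝ^d, Z)` of Peregrine-type profiles inside
the space of bounded continuous functions: sums `v + w` with `v` uniformly continuous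
and `Γ`-periodic and `w` uniformly continuous tending to `0` at infinity. -/
def peregrineSpace {Z : Type*} [NormedAddCommGroup Z] {d q : ℕ}
    (γ : Fin q → EuclideanSpace ℝ (Fin d)) :
    Set (EuclideanSpace ℝ (Fin d) →ᵇ Z) :=
  {u | ∃ v w : EuclideanSpace ℝ (Fin d) →ᵇ Z,
    UniformContinuous v ∧
    (∀ (n : Fin q → ℤ) (x : EuclideanSpace ℝ (Fin d)), v (x + ∑ j, n j • γ j) = v x) ∧
    UniformContinuous w ∧
    Tendsto w (cocompact (EuclideanSpace ℝ (Fin d))) (𝓝 0) ∧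
    u = v + w}

/-! Along a nonzero lattice vector `γ` the `C₀` part of `u = v + w` dies out while the periodic
part repeats, so `v x = lim_k u (x + k • γ)` and `‖v‖ ≤ ‖u‖`. For `u_n = v_n + w_n → u` the
periodic parts `v_n` are therefore Cauchy; their limit, and the limit of `w_n = u_n - v_n`, stay
in the two summands, which are closed subspaces of the bounded continuous functions. -/

theorem Submodule.isClosed_sup_of_norm_le {R E : Type*} [Ring R] [NormedAddCommGroup E]
    [CompleteSpace E] [Module R E] {P C : Submodule R E} (hP : IsClosed (P : Set E))
    (hC : IsClosed (C : Set E)) {K : ℝ} (hK : ∀ p ∈ P, ∀ c ∈ C, ‖p‖ ≤ K * ‖p + c‖) :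
    IsClosed ((P ⊔ C : Submodule R E) : Set E) := by
  refine IsSeqClosed.isClosed fun u x hu hux => ?_
  simp only [SetLike.mem_coe, Submodule.mem_sup] at hu
  choose p hp c hc hpc using hu
  have hdist : ∀ m n, dist (p m) (p n) ≤ K * dist (u m) (u n) := fun m n => by
    simpa [dist_eq_norm, ← hpc, add_sub_add_comm] using
      hK _ (P.sub_mem (hp m) (hp n)) _ (C.sub_mem (hc m) (hc n))
  have hp_cauchy : CauchySeq p := by
    refine cauchySeq_iff_tendsto_dist_atTop_0.2 <|
      squeeze_zero (fun _ => dist_nonneg) (fun mn => hdist mn.1 mn.2) ?_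
    simpa using (cauchySeq_iff_tendsto_dist_atTop_0.1 hux.cauchySeq).const_mul K
  obtain ⟨y, hy⟩ := cauchySeq_tendsto_of_complete hp_cauchy
  have hc_lim : Tendsto c atTop (𝓝 (x - y)) := by
    simpa [← hpc] using hux.sub hy
  exact Submodule.mem_sup.2 ⟨y, hP.mem_of_tendsto hy (.of_forall hp),
    x - y, hC.mem_of_tendsto hc_lim (.of_forall hc), add_sub_cancel y x⟩

theorem tendsto_add_nsmul_cobounded {E : Type*} [NormedAddCommGroup E] [NormedSpace ℝ E]
    (x : E) {γ : E} (hγ : γ ≠ 0) :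
    Tendsto (fun k : ℕ => x + k • γ) atTop (Bornology.cobounded E) := by
  refine (tendsto_const_add_cobounded x).comp ?_
  rw [← tendsto_norm_atTop_iff_cobounded]
  simpa [RCLike.norm_nsmul ℝ] using
    tendsto_natCast_atTop_atTop.atTop_mul_const (norm_pos_iff.mpr hγ)

namespace BoundedContinuousFunction

theorem norm_le_norm_add_of_periodic {E Z : Type*} [NormedAddCommGroup E] [NormedSpace ℝ E]
    [SeminormedAddCommGroup Z] {v w : E →ᵇ Z} {γ : E} (hv : Function.Periodic v γ) (hγ : γ ≠ 0)
    (hw : Tendsto w (cocompact E) (𝓝 0)) : ‖v‖ ≤ ‖v + w‖ := by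
  refine (norm_le (norm_nonneg _)).2 fun x => ?_
  have hw_shift : Tendsto (fun k : ℕ => w (x + k • γ)) atTop (𝓝 0) :=
    hw.comp ((tendsto_add_nsmul_cobounded x hγ).mono_right Metric.cobounded_le_cocompact)
  have h_shift : Tendsto (fun k : ℕ => (v + w) (x + k • γ)) atTop (𝓝 (v x)) := by
    simpa only [add_zero] using ((tendsto_const_nhds (x := v x)).add hw_shift).congr fun k => by
      rw [add_apply, hv.nsmul k x]
  exact le_of_tendsto' h_shift.norm fun k => norm_coe_le_norm _ _

variable (𝕜 α Z : Type*) [NormedField 𝕜] [NormedAddCommGroup Z] [NormedSpace 𝕜 Z]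

def uniformContinuousSubmodule [UniformSpace α] : Submodule 𝕜 (α →ᵇ Z) where
  carrier := {f | UniformContinuous f}
  add_mem' hf hg := hf.add hg
  zero_mem' := uniformContinuous_const
  smul_mem' c _ hf := hf.const_smul c

def periodicSubmodule [TopologicalSpace α] [Add α] (S : Set α) : Submodule 𝕜 (α →ᵇ Z) where
  carrier := {f | ∀ s ∈ S, Function.Periodic f s}
  add_mem' hf hg s hs := (hf s hs).add (hg s hs)
  zero_mem' _ _ _ := rfl
  smul_mem' c _ hf s hs := (hf s hs).smul c

def zeroAtInftySubmodule [TopologicalSpace α] : Submodule 𝕜 (α →ᵇ Z) where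
  carrier := {f | Tendsto f (cocompact α) (𝓝 0)}
  add_mem' hf hg := by
    simpa only [Set.mem_ofPred_eq, coe_add, Pi.add_def, add_zero] using hf.add hg
  zero_mem' := tendsto_const_nhds
  smul_mem' c _ hf := by
    simpa only [Set.mem_ofPred_eq, coe_smul, smul_zero] using hf.const_smul c

variable {𝕜 α Z}

theorem isClosed_uniformContinuousSubmodule [UniformSpace α] :
    IsClosed (uniformContinuousSubmodule 𝕜 α Z : Set (α →ᵇ Z)) :=
  IsSeqClosed.isClosed fun _ _ hf hlim =>
    (tendsto_iff_tendstoUniformly.1 hlim).uniformContinuous (.of_forall hf)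

theorem isClosed_periodicSubmodule [TopologicalSpace α] [Add α] (S : Set α) :
    IsClosed (periodicSubmodule 𝕜 α Z S : Set (α →ᵇ Z)) := by
  simp only [periodicSubmodule, Function.Periodic, Submodule.coe_set_mk,
    AddSubmonoid.coe_set_mk, AddSubsemigroup.coe_set_mk, Set.ofPred_forall]
  exact isClosed_biInter fun s _ => isClosed_iInter fun x =>
    isClosed_eq (continuous_eval_const _) (continuous_eval_const _)

theorem isClosed_zeroAtInftySubmodule [TopologicalSpace α] :
    IsClosed (zeroAtInftySubmodule 𝕜 α Z : Set (α →ᵇ Z)) := by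
  convert ZeroAtInftyContinuousMap.isClosed_range_toBCF (α := α) (β := Z)
  ext f
  exact ⟨fun hf => ⟨⟨f.toContinuousMap, hf⟩, rfl⟩, by rintro ⟨g, rfl⟩; exact zero_at_infty g⟩

theorem mem_periodicSubmodule_span_range_iff [TopologicalSpace α] [AddCommGroup α] {ι : Type*}
    [Fintype ι] (γ : ι → α) (v : α →ᵇ Z) :
    v ∈ periodicSubmodule 𝕜 α Z (Submodule.span ℤ (Set.range γ)) ↔
      ∀ (n : ι → ℤ) (x : α), v (x + ∑ j, n j • γ j) = v x := by
  simp [periodicSubmodule, Submodule.mem_span_range_iff_exists_fun, Function.Periodic]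

end BoundedContinuousFunction

theorem peregrineSpace_eq_sup {Z : Type*} [NormedAddCommGroup Z] [NormedSpace ℝ Z] {d q : ℕ}
    (γ : Fin q → EuclideanSpace ℝ (Fin d)) :
    peregrineSpace (Z := Z) γ =
      ((uniformContinuousSubmodule ℝ _ Z ⊓
          periodicSubmodule ℝ _ Z (Submodule.span ℤ (Set.range γ))) ⊔
        (uniformContinuousSubmodule ℝ _ Z ⊓ zeroAtInftySubmodule ℝ _ Z) :
        Submodule ℝ (EuclideanSpace ℝ (Fin d) →ᵇ Z)) := by
  ext u
  simp only [peregrineSpace, SetLike.mem_coe, Submodule.mem_sup, Submodule.mem_inf,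
    mem_periodicSubmodule_span_range_iff]
  constructor
  · rintro ⟨v, w, hv, hper, hw, hw0, rfl⟩
    exact ⟨v, ⟨hv, hper⟩, w, ⟨hw, hw0⟩, rfl⟩
  · rintro ⟨v, ⟨hv, hper⟩, w, ⟨hw, hw0⟩, rfl⟩
    exact ⟨v, w, hv, hper, hw, hw0, rfl⟩

theorem peregrine_stmt10_general {Z : Type*} [NormedAddCommGroup Z] [NormedSpace ℝ Z]
    [CompleteSpace Z] {d q : ℕ} (hq : 1 ≤ q)
    (γ : Fin q → EuclideanSpace ℝ (Fin d)) (hγ : LinearIndependent ℝ γ) :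
    IsClosed (peregrineSpace (Z := Z) γ) ∧
    (∀ u₁ ∈ peregrineSpace (Z := Z) γ, ∀ u₂ ∈ peregrineSpace (Z := Z) γ,
      u₁ + u₂ ∈ peregrineSpace (Z := Z) γ) ∧
    (∀ (c : ℝ), ∀ u ∈ peregrineSpace (Z := Z) γ, c • u ∈ peregrineSpace (Z := Z) γ) := by
  have hγ₀ : γ ⟨0, hq⟩ ≠ 0 := hγ.ne_zero _
  rw [peregrineSpace_eq_sup]
  refine ⟨Submodule.isClosed_sup_of_norm_le
      (isClosed_uniformContinuousSubmodule.inter (isClosed_periodicSubmodule _))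
      (isClosed_uniformContinuousSubmodule.inter isClosed_zeroAtInftySubmodule) (K := 1) ?_,
    fun _ h₁ _ h₂ => add_mem h₁ h₂, fun c _ h => Submodule.smul_mem _ c h⟩
  rintro v ⟨-, hv⟩ w ⟨-, hw⟩
  rw [one_mul]
  exact norm_le_norm_add_of_periodic (hv _ (Submodule.subset_span ⟨_, rfl⟩)) hγ₀ hw

/-- `X_{Γ,Z} = C_u(ℝ^d/Γ, Z) ⊕ C₀(ℝ^d, Z)` is a closed linear
subspace of `C_u(ℝ^d, Z)` (viewed inside the bounded continuous functions with the sup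
norm): it is closed, and stable under addition and scalar multiplication. -/
theorem peregrine_stmt10 {Z : Type*} [NormedAddCommGroup Z] [NormedSpace ℝ Z]
    [CompleteSpace Z] {d q : ℕ} (hq : 1 ≤ q) (hqd : q ≤ d)
    (γ : Fin q → EuclideanSpace ℝ (Fin d)) (hγ : LinearIndependent ℝ γ) :
    IsClosed (peregrineSpace (Z := Z) γ) ∧
    (∀ u₁ ∈ peregrineSpace (Z := Z) γ, ∀ u₂ ∈ peregrineSpace (Z := Z) γ,
      u₁ + u₂ ∈ peregrineSpace (Z := Z) γ) ∧
    (∀ (c : ℝ), ∀ u ∈ peregrineSpace (Z := Z) γ, c • u ∈ peregrineSpace (Z := Z) γ) :=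
  peregrine_stmt10_general hq γ hγ
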